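/- For every n ≥ 1 and every N ≥ 1 there exists δ > 0 such that for all a₁, …, aₙ ∈ ℂ with |aᵢ| ≤ 4 for every i, setting p = P_{aₙ} ∘ ⋯ ∘ P_{a₁}: if there exists z₀ ∈ ℂ with |z₀| ≤ δ and |p^N(z₀)| ≤ δ, then the N-th iterate p^N maps the closed ball B̄(0, 2δ) into itself and is Lipschitz on B̄(0, 2δ) with some Lipschitz constant λ < 1; consequently p^N has a unique fixed point in B̄(0, 2δ), the iterates of p^N of every point of B̄(0, 2δ) converge to this fixed point, and B̄(0, 2δ) is contained in the filled-in Julia set K(p). -/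
import Mathlib


/-- The map `P_{aₙ} ∘ ⋯ ∘ P_{a₁} : ℂ → ℂ`, where `P_a(z) = z² + a`.
Here `a i` plays the role of `a_{i+1}`, i.e. `P_{a₁}` is applied first. -/
def compQuadFun : (n : ℕ) → (Fin n → ℂ) → ℂ → ℂ
  | 0, _ => id
  | n + 1, a => (fun z => z ^ 2 + a (Fin.last n)) ∘ compQuadFun n (a ∘ Fin.castSucc)

/-- The filled-in Julia set of `F : ℂ → ℂ`: points with bounded forward orbit. -/
def filledJulia (F : ℂ → ℂ) : Set ℂ := {z : ℂ | ∃ B : ℝ, ∀ k : ℕ, ‖F^[k] z‖ ≤ B}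

noncomputable def bnd : ℕ → ℝ
  | 0 => 1
  | k + 1 => (bnd k) ^ 2 + 4

lemma one_le_bnd (k : ℕ) : 1 ≤ bnd k := by
  induction k with
  | zero => simp [bnd]
  | succ k ih => simp only [bnd]; nlinarith

lemma bnd_mono : Monotone bnd := by
  apply monotone_nat_of_le_succ
  intro k
  have := one_le_bnd k
  simp only [bnd]; nlinarith

lemma compQuad_maps (n : ℕ) (a : Fin n → ℂ) (ha : ∀ i, ‖a i‖ ≤ 4) (k : ℕ) (z : ℂ)
    (hz : ‖z‖ ≤ bnd k) : ‖compQuadFun n a z‖ ≤ bnd (k + n) := by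
  induction n generalizing k with
  | zero => simpa [compQuadFun] using hz
  | succ n ih =>
    have h1 : ‖compQuadFun n (a ∘ Fin.castSucc) z‖ ≤ bnd (k + n) :=
      ih (a ∘ Fin.castSucc) (fun i => ha _) k hz
    have h2 : ‖a (Fin.last n)‖ ≤ 4 := ha _
    have h0 : (0:ℝ) ≤ ‖compQuadFun n (a ∘ Fin.castSucc) z‖ := norm_nonneg _
    calc ‖compQuadFun (n+1) a z‖
        = ‖(compQuadFun n (a ∘ Fin.castSucc) z) ^ 2 + a (Fin.last n)‖ := rfl
      _ ≤ ‖compQuadFun n (a ∘ Fin.castSucc) z‖ ^ 2 + ‖a (Fin.last n)‖ := by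
          refine (norm_add_le _ _).trans ?_
          simp [norm_pow]
      _ ≤ bnd (k + n) ^ 2 + 4 := by nlinarith
      _ = bnd (k + (n+1)) := by rw [show k + (n+1) = (k+n)+1 from rfl, bnd]

lemma compQuad_lip (n : ℕ) (a : Fin n → ℂ) (ha : ∀ i, ‖a i‖ ≤ 4) (k : ℕ) (z w : ℂ)
    (hz : ‖z‖ ≤ bnd k) (hw : ‖w‖ ≤ bnd k) :
    ‖compQuadFun n a z - compQuadFun n a w‖ ≤ (2 * bnd (k + n)) ^ n * ‖z - w‖ := by
  induction n generalizing k with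
  | zero => simp [compQuadFun]
  | succ n ih =>
    set u := compQuadFun n (a ∘ Fin.castSucc) z with hu
    set v := compQuadFun n (a ∘ Fin.castSucc) w with hv
    have hub : ‖u‖ ≤ bnd (k + n) := compQuad_maps n _ (fun i => ha _) k z hz
    have hvb : ‖v‖ ≤ bnd (k + n) := compQuad_maps n _ (fun i => ha _) k w hw
    have hlip : ‖u - v‖ ≤ (2 * bnd (k + n)) ^ n * ‖z - w‖ := ih _ (fun i => ha _) k hz hw
    have key : ‖compQuadFun (n+1) a z - compQuadFun (n+1) a w‖ = ‖u^2 - v^2‖ := by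
      have : compQuadFun (n+1) a z - compQuadFun (n+1) a w = u^2 - v^2 := by
        show (u^2 + a (Fin.last n)) - (v^2 + a (Fin.last n)) = u^2 - v^2
        ring
      rw [this]
    rw [key]
    have h2 : ‖u^2 - v^2‖ ≤ (2 * bnd (k+n)) * ‖u - v‖ := by
      have : u^2 - v^2 = (u + v) * (u - v) := by ring
      rw [this, norm_mul]
      have : ‖u + v‖ ≤ 2 * bnd (k+n) := (norm_add_le _ _).trans (by linarith)
      exact mul_le_mul_of_nonneg_right this (norm_nonneg _)
    have hb1 : (1:ℝ) ≤ 2 * bnd (k+n) := by have := one_le_bnd (k+n); linarith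
    have hb2 : 2 * bnd (k+n) ≤ 2 * bnd (k+(n+1)) := by
      have h := bnd_mono (Nat.le_succ (k+n))
      rw [show k + (n+1) = (k+n)+1 from rfl]
      linarith
    calc ‖u^2 - v^2‖ ≤ (2 * bnd (k+n)) * ((2 * bnd (k + n)) ^ n * ‖z - w‖) := by
          refine h2.trans ?_
          exact mul_le_mul_of_nonneg_left hlip (by linarith)
      _ ≤ (2 * bnd (k+(n+1))) * ((2 * bnd (k + (n+1))) ^ n * ‖z - w‖) := by
          have hp : (2 * bnd (k + n)) ^ n ≤ (2 * bnd (k + (n+1))) ^ n :=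
            pow_le_pow_left₀ (by linarith) hb2 n
          have h0 : (0:ℝ) ≤ ‖z - w‖ := norm_nonneg _
          rw [← mul_assoc, ← mul_assoc]
          exact mul_le_mul_of_nonneg_right
            (mul_le_mul hb2 hp (pow_nonneg (by linarith) n) (by linarith)) h0
      _ = (2 * bnd (k + (n+1))) ^ (n+1) * ‖z - w‖ := by ring

lemma compQuad_decomp (n : ℕ) (a : Fin (n+1) → ℂ) :
    compQuadFun (n+1) a = compQuadFun n (a ∘ Fin.succ) ∘ (fun z => z ^ 2 + a 0) := by
  induction n with
  | zero => funext z; rfl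
  | succ n ih =>
    funext z
    have e1 : (a ∘ Fin.castSucc) ∘ Fin.succ = (a ∘ Fin.succ) ∘ Fin.castSucc := by
      funext i
      simp only [Function.comp_apply, Fin.succ_castSucc]
    show (compQuadFun (n+1) (a ∘ Fin.castSucc) z) ^ 2 + a (Fin.last (n+1))
        = (compQuadFun n ((a ∘ Fin.succ) ∘ Fin.castSucc) (z ^ 2 + a 0)) ^ 2
          + (a ∘ Fin.succ) (Fin.last n)
    rw [ih (a ∘ Fin.castSucc), e1]
    simp only [Function.comp_apply, Fin.castSucc_zero, Fin.succ_last]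

lemma two_bnd_pow_le {j j' e e' : ℕ} (hj : j ≤ j') (he : e ≤ e') :
    (2 * bnd j) ^ e ≤ (2 * bnd j') ^ e' := by
  have h1 : (1:ℝ) ≤ 2 * bnd j' := by have := one_le_bnd j'; linarith
  calc (2 * bnd j) ^ e ≤ (2 * bnd j') ^ e :=
        pow_le_pow_left₀ (by have := one_le_bnd j; linarith)
          (by have := bnd_mono hj; linarith) e
    _ ≤ (2 * bnd j') ^ e' := pow_le_pow_right₀ h1 he

lemma iter_maps (n : ℕ) (a : Fin n → ℂ) (ha : ∀ i, ‖a i‖ ≤ 4) (m k : ℕ) (z : ℂ)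
    (hz : ‖z‖ ≤ bnd k) : ‖(compQuadFun n a)^[m] z‖ ≤ bnd (k + m * n) := by
  induction m with
  | zero => simpa using hz
  | succ m ih =>
    rw [Function.iterate_succ_apply']
    have h := compQuad_maps n a ha (k + m * n) _ ih
    rw [show k + (m+1) * n = (k + m * n) + n by ring]
    exact h

lemma iter_lip (n : ℕ) (a : Fin n → ℂ) (ha : ∀ i, ‖a i‖ ≤ 4) (m k : ℕ) (z w : ℂ)
    (hz : ‖z‖ ≤ bnd k) (hw : ‖w‖ ≤ bnd k) :
    ‖(compQuadFun n a)^[m] z - (compQuadFun n a)^[m] w‖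
      ≤ (2 * bnd (k + m * n)) ^ (m * n) * ‖z - w‖ := by
  induction m with
  | zero => simp
  | succ m ih =>
    rw [Function.iterate_succ_apply', Function.iterate_succ_apply']
    have hu := iter_maps n a ha m k z hz
    have hv := iter_maps n a ha m k w hw
    have h1 := compQuad_lip n a ha (k + m * n) _ _ hu hv
    have hmn : m * n ≤ (m+1) * n := Nat.mul_le_mul_right _ (Nat.le_succ m)
    have h2 : (2 * bnd (k + m * n + n)) ^ n ≤ (2 * bnd (k + (m+1) * n)) ^ n :=
      two_bnd_pow_le (le_of_eq (by ring)) le_rfl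
    have h3 : (2 * bnd (k + m * n)) ^ (m * n) ≤ (2 * bnd (k + (m+1) * n)) ^ (m * n) :=
      two_bnd_pow_le (by omega) le_rfl
    have hnn1 : (0:ℝ) ≤ (2 * bnd (k + m * n + n)) ^ n :=
      pow_nonneg (by have := one_le_bnd (k + m * n + n); linarith) n
    have hnn2 : (0:ℝ) ≤ (2 * bnd (k + m * n)) ^ (m * n) :=
      pow_nonneg (by have := one_le_bnd (k + m * n); linarith) (m * n)
    have hnn3 : (0:ℝ) ≤ (2 * bnd (k + (m+1) * n)) ^ n :=
      pow_nonneg (by have := one_le_bnd (k + (m+1) * n); linarith) n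
    calc ‖(compQuadFun n a) ((compQuadFun n a)^[m] z)
            - (compQuadFun n a) ((compQuadFun n a)^[m] w)‖
        ≤ (2 * bnd (k + m * n + n)) ^ n
            * ‖(compQuadFun n a)^[m] z - (compQuadFun n a)^[m] w‖ := h1
      _ ≤ (2 * bnd (k + m * n + n)) ^ n
            * ((2 * bnd (k + m * n)) ^ (m * n) * ‖z - w‖) :=
          mul_le_mul_of_nonneg_left ih hnn1
      _ ≤ (2 * bnd (k + (m+1) * n)) ^ n
            * ((2 * bnd (k + (m+1) * n)) ^ (m * n) * ‖z - w‖) := by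
          rw [← mul_assoc, ← mul_assoc]
          exact mul_le_mul_of_nonneg_right
            (mul_le_mul h2 h3 hnn2 hnn3) (norm_nonneg _)
      _ = (2 * bnd (k + (m+1) * n)) ^ ((m+1) * n) * ‖z - w‖ := by
          rw [← mul_assoc, ← pow_add]
          ring_nf

set_option maxHeartbeats 1600000 in
/-- For every `n, N ≥ 1` there is `δ > 0` so that for all parameters with `|aᵢ| ≤ 4`:
if some point `z₀` with `|z₀| ≤ δ` satisfies `|p^N(z₀)| ≤ δ`, then `p^N` maps the
closed ball `B̄(0, 2δ)` into itself as a contraction (Lipschitz with constant `< 1`);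
consequently `p^N` has a unique fixed point in `B̄(0, 2δ)`, all orbits of `p^N`
starting in `B̄(0, 2δ)` converge to it, and `B̄(0, 2δ) ⊆ K(p)`. -/
theorem compQuad_attracting_ball (n : ℕ) (hn : 1 ≤ n) (N : ℕ) (hN : 1 ≤ N) :
    ∃ δ : ℝ, 0 < δ ∧ ∀ a : Fin n → ℂ, (∀ i, ‖a i‖ ≤ 4) →
      ∀ z₀ : ℂ, ‖z₀‖ ≤ δ → ‖(compQuadFun n a)^[N] z₀‖ ≤ δ →
        Set.MapsTo (compQuadFun n a)^[N]
            (Metric.closedBall (0 : ℂ) (2 * δ)) (Metric.closedBall (0 : ℂ) (2 * δ)) ∧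
        (∃ lam : NNReal, lam < 1 ∧
            LipschitzOnWith lam (compQuadFun n a)^[N] (Metric.closedBall (0 : ℂ) (2 * δ))) ∧
        (∃! w : ℂ, w ∈ Metric.closedBall (0 : ℂ) (2 * δ) ∧ (compQuadFun n a)^[N] w = w) ∧
        (∀ w ∈ Metric.closedBall (0 : ℂ) (2 * δ), (compQuadFun n a)^[N] w = w →
          ∀ z ∈ Metric.closedBall (0 : ℂ) (2 * δ),
            Filter.Tendsto (fun k : ℕ => ((compQuadFun n a)^[N])^[k] z)
              Filter.atTop (nhds w)) ∧
        Metric.closedBall (0 : ℂ) (2 * δ) ⊆ filledJulia (compQuadFun n a) := by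
  obtain ⟨m, rfl⟩ : ∃ m, n = m + 1 := ⟨n - 1, by omega⟩
  obtain ⟨M, rfl⟩ : ∃ M, N = M + 1 := ⟨N - 1, by omega⟩
  set J : ℕ := (m + 1) * (M + 1) with hJ
  set E : ℝ := (2 * bnd J) ^ (2 * J) with hE
  have hbJ : (1:ℝ) ≤ bnd J := one_le_bnd J
  have hE1 : (1:ℝ) ≤ E := one_le_pow₀ (by linarith)
  have hE0 : (0:ℝ) < E := by linarith
  obtain ⟨δ, hδpos, hδhalf, hδE⟩ : ∃ δ : ℝ, 0 < δ ∧ δ ≤ 1/2 ∧ 4 * δ * E ≤ 1/3 := by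
    refine ⟨min (1/2) (1/(12 * E)), lt_min (by norm_num) (by positivity),
      min_le_left _ _, ?_⟩
    have h1 : min (1/2) (1/(12 * E)) ≤ 1/(12 * E) := min_le_right _ _
    have h1' : 0 < min ((1:ℝ)/2) (1/(12 * E)) := lt_min (by norm_num) (by positivity)
    have h2 : 4 * min (1/2) (1/(12 * E)) * E ≤ 4 * (1/(12 * E)) * E := by nlinarith
    have h3 : 4 * (1/(12 * E)) * E = 1/3 := by field_simp; ring
    linarith
  clear_value E
  refine ⟨δ, hδpos, ?_⟩
  intro a ha z₀ hz₀ hpz₀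
  set p : ℂ → ℂ := compQuadFun (m + 1) a with hp
  set F : ℂ → ℂ := p^[M + 1] with hF
  clear_value p F
  -- the key contraction estimate
  have hpball : ∀ u : ℂ, ‖u‖ ≤ 2 * δ → ‖p u‖ ≤ bnd (1 + m) := by
    intro u hu
    have hq : ‖u ^ 2 + a 0‖ ≤ bnd 1 := by
      have h1 : ‖u ^ 2‖ ≤ 1 := by
        rw [norm_pow]
        nlinarith [norm_nonneg u]
      have h2 := ha 0
      calc ‖u ^ 2 + a 0‖ ≤ ‖u ^ 2‖ + ‖a 0‖ := norm_add_le _ _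
        _ ≤ 5 := by linarith
        _ = bnd 1 := by norm_num [bnd]
    rw [hp, compQuad_decomp m a]
    exact compQuad_maps m _ (fun i => ha _) 1 _ hq
  have hcontr : ∀ z w : ℂ, ‖z‖ ≤ 2 * δ → ‖w‖ ≤ 2 * δ →
      ‖F z - F w‖ ≤ (1/3) * ‖z - w‖ := by
    intro z w hz hw
    have hqz : ‖z ^ 2 + a 0‖ ≤ bnd 1 := by
      have hpz := hpball z hz
      have h1 : ‖z ^ 2‖ ≤ 1 := by rw [norm_pow]; nlinarith [norm_nonneg z]
      have h2 := ha 0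
      calc ‖z ^ 2 + a 0‖ ≤ ‖z ^ 2‖ + ‖a 0‖ := norm_add_le _ _
        _ ≤ 5 := by linarith
        _ = bnd 1 := by norm_num [bnd]
    have hqw : ‖w ^ 2 + a 0‖ ≤ bnd 1 := by
      have h1 : ‖w ^ 2‖ ≤ 1 := by rw [norm_pow]; nlinarith [norm_nonneg w]
      have h2 := ha 0
      calc ‖w ^ 2 + a 0‖ ≤ ‖w ^ 2‖ + ‖a 0‖ := norm_add_le _ _
        _ ≤ 5 := by linarith
        _ = bnd 1 := by norm_num [bnd]
    -- Lipschitz bound for the first quadratic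
    have hqlip : ‖(z ^ 2 + a 0) - (w ^ 2 + a 0)‖ ≤ (4 * δ) * ‖z - w‖ := by
      have he : (z ^ 2 + a 0) - (w ^ 2 + a 0) = (z + w) * (z - w) := by ring
      rw [he, norm_mul]
      have : ‖z + w‖ ≤ 4 * δ := (norm_add_le _ _).trans (by linarith)
      exact mul_le_mul_of_nonneg_right this (norm_nonneg _)
    -- Lipschitz bound for p on the small ball
    have hplip : ‖p z - p w‖ ≤ (2 * bnd (1 + m)) ^ m * ((4 * δ) * ‖z - w‖) := by
      have hg := compQuad_lip m (a ∘ Fin.succ) (fun i => ha _) 1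
        (z ^ 2 + a 0) (w ^ 2 + a 0) hqz hqw
      have hgn : (0:ℝ) ≤ (2 * bnd (1 + m)) ^ m :=
        pow_nonneg (by have := one_le_bnd (1 + m); linarith) m
      calc ‖p z - p w‖
          = ‖compQuadFun m (a ∘ Fin.succ) (z ^ 2 + a 0)
              - compQuadFun m (a ∘ Fin.succ) (w ^ 2 + a 0)‖ := by
            rw [hp, compQuad_decomp m a]; rfl
        _ ≤ (2 * bnd (1 + m)) ^ m * ‖(z ^ 2 + a 0) - (w ^ 2 + a 0)‖ := hg
        _ ≤ (2 * bnd (1 + m)) ^ m * ((4 * δ) * ‖z - w‖) :=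
            mul_le_mul_of_nonneg_left hqlip hgn
    -- Lipschitz bound for p^[M] on the intermediate ball
    have hMlip := iter_lip (m + 1) a ha M (1 + m) (p z) (p w)
      (hpball z hz) (hpball w hw)
    rw [← hp] at hMlip
    have hFz : F z - F w = p^[M] (p z) - p^[M] (p w) := by
      rw [hF, Function.iterate_succ_apply, Function.iterate_succ_apply]
    have hidx : 1 + m + M * (m + 1) = J := by rw [hJ]; ring
    have hexp1 : (2 * bnd (1 + m + M * (m + 1))) ^ (M * (m + 1)) ≤ (2 * bnd J) ^ J :=
      two_bnd_pow_le (le_of_eq hidx) (by rw [hJ]; nlinarith)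
    have hexp2 : (2 * bnd (1 + m)) ^ m ≤ (2 * bnd J) ^ J :=
      two_bnd_pow_le (by rw [hJ]; nlinarith) (by rw [hJ]; nlinarith)
    have hpow0 : (0:ℝ) ≤ (2 * bnd (1 + m + M * (m + 1))) ^ (M * (m + 1)) :=
      pow_nonneg (by have := one_le_bnd (1 + m + M * (m + 1)); linarith) _
    have hpow1 : (0:ℝ) ≤ (2 * bnd (1 + m)) ^ m :=
      pow_nonneg (by have := one_le_bnd (1 + m); linarith) _
    have hpowJ : (0:ℝ) ≤ (2 * bnd J) ^ J := pow_nonneg (by linarith) _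
    have hEeq : (2 * bnd J) ^ J * (2 * bnd J) ^ J = E := by
      rw [hE, ← pow_add]; ring_nf
    calc ‖F z - F w‖
        = ‖p^[M] (p z) - p^[M] (p w)‖ := by rw [hFz]
      _ ≤ (2 * bnd (1 + m + M * (m + 1))) ^ (M * (m + 1)) * ‖p z - p w‖ := hMlip
      _ ≤ (2 * bnd (1 + m + M * (m + 1))) ^ (M * (m + 1))
            * ((2 * bnd (1 + m)) ^ m * ((4 * δ) * ‖z - w‖)) :=
          mul_le_mul_of_nonneg_left hplip hpow0
      _ = ((2 * bnd (1 + m + M * (m + 1))) ^ (M * (m + 1)) * (2 * bnd (1 + m)) ^ m)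
            * ((4 * δ) * ‖z - w‖) := by ring
      _ ≤ ((2 * bnd J) ^ J * (2 * bnd J) ^ J) * ((4 * δ) * ‖z - w‖) :=
          mul_le_mul_of_nonneg_right (mul_le_mul hexp1 hexp2 hpow1 hpowJ)
            (mul_nonneg (by linarith) (norm_nonneg _))
      _ = (4 * δ * E) * ‖z - w‖ := by rw [hEeq]; ring
      _ ≤ (1/3) * ‖z - w‖ :=
          mul_le_mul_of_nonneg_right hδE (norm_nonneg _)
  -- set notation
  set s : Set ℂ := Metric.closedBall (0 : ℂ) (2 * δ) with hs
  have hmem : ∀ x : ℂ, x ∈ s ↔ ‖x‖ ≤ 2 * δ := by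
    intro x; rw [hs, mem_closedBall_zero_iff]
  have hz₀s : z₀ ∈ s := (hmem z₀).mpr (by linarith)
  -- MapsTo
  have hmaps : Set.MapsTo F s s := by
    intro z hz
    rw [hmem] at hz ⊢
    have h1 := hcontr z z₀ hz (by linarith)
    have h2 : ‖F z‖ - ‖F z₀‖ ≤ ‖F z - F z₀‖ := norm_sub_norm_le (F z) (F z₀)
    have h3 : ‖z - z₀‖ ≤ ‖z‖ + ‖z₀‖ := norm_sub_le _ _
    linarith
  -- Lipschitz constant
  set lam : NNReal := ⟨1/3, by norm_num⟩ with hlam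
  have hcoe : (lam : ℝ) = 1/3 := rfl
  have hlam1 : lam < 1 := by
    rw [← NNReal.coe_lt_coe, hcoe, NNReal.coe_one]; norm_num
  have hlipOn : LipschitzOnWith lam F s := by
    rw [lipschitzOnWith_iff_dist_le_mul]
    intro x hx y hy
    rw [dist_eq_norm, dist_eq_norm, hcoe]
    exact hcontr x y ((hmem x).mp hx) ((hmem y).mp hy)
  -- uniqueness helper
  have huniq : ∀ w1 ∈ s, F w1 = w1 → ∀ w2 ∈ s, F w2 = w2 → w1 = w2 := by
    intro w1 h1 hf1 w2 h2 hf2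
    have hc := hcontr w1 w2 ((hmem w1).mp h1) ((hmem w2).mp h2)
    rw [hf1, hf2] at hc
    have : ‖w1 - w2‖ = 0 := by linarith [norm_nonneg (w1 - w2)]
    have := norm_sub_eq_zero_iff.mp this
    exact this
  -- existence of fixed point via Banach
  have hsc : IsComplete s := Metric.isClosed_closedBall.isComplete
  have hre : LipschitzWith lam (hmaps.restrict F s s) := by
    intro x y
    rw [Subtype.edist_eq, Set.MapsTo.val_restrict_apply, Set.MapsTo.val_restrict_apply]
    exact hlipOn x.2 y.2
  have hcw : ContractingWith lam (hmaps.restrict F s s) := ⟨hlam1, hre⟩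
  obtain ⟨w, hws, hwfix, -, -⟩ :=
    hcw.exists_fixedPoint' hsc hmaps hz₀s (edist_ne_top _ _)
  -- convergence
  have hconv : ∀ w' ∈ s, F w' = w' → ∀ z ∈ s,
      Filter.Tendsto (fun k : ℕ => F^[k] z) Filter.atTop (nhds w') := by
    intro w' hw's hw'f z hz
    have hiter : ∀ k, F^[k] z ∈ s := fun k => hmaps.iterate k hz
    have hdist : ∀ k, dist (F^[k] z) w' ≤ (1/3 : ℝ)^k * dist z w' := by
      intro k
      induction k with
      | zero => simp
      | succ k ih =>
        rw [Function.iterate_succ_apply']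
        have hc := hcontr (F^[k] z) w' ((hmem _).mp (hiter k)) ((hmem _).mp hw's)
        rw [hw'f] at hc
        simp only [dist_eq_norm] at ih ⊢
        calc ‖F (F^[k] z) - w'‖ ≤ (1/3) * ‖F^[k] z - w'‖ := hc
          _ ≤ (1/3) * ((1/3 : ℝ)^k * ‖z - w'‖) := by linarith
          _ = (1/3 : ℝ)^(k+1) * ‖z - w'‖ := by ring
    rw [tendsto_iff_dist_tendsto_zero]
    apply squeeze_zero (fun k => dist_nonneg) hdist
    have h0 : Filter.Tendsto (fun k : ℕ => (1/3 : ℝ)^k) Filter.atTop (nhds 0) :=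
      tendsto_pow_atTop_nhds_zero_of_lt_one (by norm_num) (by norm_num)
    simpa using h0.mul_const (dist z w')
  refine ⟨hmaps, ⟨lam, hlam1, hlipOn⟩, ⟨w, ⟨hws, hwfix⟩, ?_⟩, hconv, ?_⟩
  · rintro w' ⟨hw's, hw'f⟩
    exact huniq w' hw's hw'f w hws hwfix
  · -- filled Julia set
    intro z hz
    refine ⟨bnd J, fun k => ?_⟩
    have key : ∀ k : ℕ, ∃ q r : ℕ, r ≤ M ∧ p^[k] z = p^[r] (F^[q] z) := by
      intro k
      induction k with
      | zero => exact ⟨0, 0, Nat.zero_le _, rfl⟩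
      | succ k ih =>
        obtain ⟨q, r, hr, hk⟩ := ih
        rcases Nat.lt_or_ge r M with h | h
        · refine ⟨q, r+1, h, ?_⟩
          calc p^[k+1] z = p (p^[k] z) := Function.iterate_succ_apply' p k z
            _ = p (p^[r] (F^[q] z)) := by rw [hk]
            _ = p^[r+1] (F^[q] z) := (Function.iterate_succ_apply' p r _).symm
        · have hrM : r = M := le_antisymm hr h
          refine ⟨q+1, 0, Nat.zero_le _, ?_⟩
          calc p^[k+1] z = p (p^[k] z) := Function.iterate_succ_apply' p k z
            _ = p (p^[M] (F^[q] z)) := by rw [hk, hrM]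
            _ = p^[M+1] (F^[q] z) := (Function.iterate_succ_apply' p M _).symm
            _ = F (F^[q] z) := by rw [hF]
            _ = F^[q+1] z := (Function.iterate_succ_apply' F q z).symm
            _ = p^[0] (F^[q+1] z) := rfl
    obtain ⟨q, r, hr, hk⟩ := key k
    have h3 : F^[q] z ∈ s := hmaps.iterate q hz
    have h4 : ‖F^[q] z‖ ≤ bnd 0 := by
      rw [show bnd 0 = (1:ℝ) from rfl]
      have := (hmem _).mp h3
      linarith
    have h5 := iter_maps (m+1) a ha r 0 _ h4
    rw [← hp] at h5
    rw [hk]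
    refine h5.trans (bnd_mono ?_)
    have hmul : r * (m+1) ≤ (m+1) * (M+1) := by
      rw [mul_comm]; exact Nat.mul_le_mul_left _ (by omega)
    rw [hJ]
    omega
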